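/- arXiv:2306.15118 — 4 statements merged into one kernel-verified Lean document; each statement's English description precedes it below -/
import Mathlib

section
/- Let K be an infinite field, n and s integers with 1 ≤ s ≤ n, and p a nonzero commutative polynomial in s variables over K. Then there exist a_1,...,a_n ∈ K such that p(a_{i_1},...,a_{i_s}) ≠ 0 for every increasing sequence 1 ≤ i_1 < i_2 < ... < i_s ≤ n. -/
theorem stmt_1 {K : Type*} [Field K] [Infinite K] (n s : ℕ) (hs1 : 1 ≤ s) (hsn : s ≤ n)
    (p : MvPolynomial (Fin s) K) (hp : p ≠ 0) :
    ∃ a : Fin n → K, ∀ φ : Fin s → Fin n, StrictMono φ →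
      MvPolynomial.eval (fun i => a (φ i)) p ≠ 0 := by
  classical
  set q : MvPolynomial (Fin n) K :=
    ∏ φ ∈ Finset.univ.filter (fun φ : Fin s → Fin n => StrictMono φ),
      MvPolynomial.rename φ p with hq
  have hq0 : q ≠ 0 := by
    apply Finset.prod_ne_zero_iff.mpr
    intro φ hφ
    simp only [Finset.mem_filter] at hφ
    exact fun h => hp ((MvPolynomial.rename_injective φ hφ.2.injective).eq_iff.mp
      (by simpa using h))
  have : ¬ ∀ x : Fin n → K, MvPolynomial.eval x q = MvPolynomial.eval x 0 := by
    intro h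
    exact hq0 (MvPolynomial.funext h)
  push_neg at this
  obtain ⟨a, ha⟩ := this
  refine ⟨a, fun φ hφ => ?_⟩
  rw [map_zero] at ha
  have := Finset.prod_ne_zero_iff.mp (by rwa [hq, map_prod] at ha) φ
    (Finset.mem_filter.mpr ⟨Finset.mem_univ _, hφ⟩)
  rwa [MvPolynomial.eval_rename] at this
end

section
/- Let K be a field, n ≥ 2, and p(x_1,...,x_m) a noncommutative polynomial with zero constant term over K of order r with 1 < r < n − 1. Then the image p(T_n(K)) is contained in T_n(K)^{(r−1)}, the set of upper triangular n × n matrices whose (i,j) entries vanish whenever j − i ≤ r − 1. -/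
/-- `A` is upper triangular. -/
def UT {K : Type*} [Field K] {n : ℕ} (A : Matrix (Fin n) (Fin n) K) : Prop :=
  ∀ i j : Fin n, (j : ℕ) < (i : ℕ) → A i j = 0

/-- `p` has zero constant term. -/
def ZeroConst {K : Type*} [Field K] {m : ℕ} (p : FreeAlgebra K (Fin m)) : Prop :=
  FreeAlgebra.lift K (fun _ : Fin m => (0 : K)) p = 0

/-- `p` has order `r`: it vanishes on all upper triangular `r × r` matrices but not on
all upper triangular `(r+1) × (r+1)` matrices. -/
def HasOrder {K : Type*} [Field K] {m : ℕ} (p : FreeAlgebra K (Fin m)) (r : ℕ) : Prop :=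
  (∀ u : Fin m → Matrix (Fin r) (Fin r) K, (∀ i, UT (u i)) →
      FreeAlgebra.lift K u p = 0) ∧
  ∃ u : Fin m → Matrix (Fin (r + 1)) (Fin (r + 1)) K, (∀ i, UT (u i)) ∧
      FreeAlgebra.lift K u p ≠ 0


/-!
Compressing upper triangular matrices to a block of consecutive indices is multiplicative,
hence an algebra homomorphism on `T_n(K)` that commutes with evaluating `p`. Every entry
`(i, j)` with `i ≤ j < i + r` lies in some `r × r` diagonal block, and `p` vanishes on `T_r(K)`.
-/

open Function

namespace Matrix

variable {m n R : Type*}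

/-- For upper triangular factors, the summands `M i k * N k j` with `k` outside `[i, j]`
vanish. -/
theorem IsUpperTriangular.submatrix_mul [LinearOrder m] [Fintype m] [Fintype n]
    [NonUnitalNonAssocSemiring R] {M N : Matrix m m R} (hM : M.IsUpperTriangular)
    (hN : N.IsUpperTriangular) {e : n → m} (he : Injective e)
    (hconv : (Set.range e).OrdConnected) :
    (M * N).submatrix e e = M.submatrix e e * N.submatrix e e := by
  ext s t
  simp only [submatrix_apply, mul_apply]
  refine (Fintype.sum_of_injective e he _ _ (fun k hk => ?_) fun _ => rfl).symm
  rcases lt_or_ge k (e s) with hks | hsk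
  · rw [hM hks, zero_mul]
  rcases lt_or_ge (e t) k with htk | hkt
  · rw [hN htk, mul_zero]
  exact absurd (hconv.out (Set.mem_range_self s) (Set.mem_range_self t) ⟨hsk, hkt⟩) hk

end Matrix

namespace FreeAlgebra

variable {R X A : Type*} [CommSemiring R] [Semiring A] [Algebra R A]

theorem lift_mem {S : Subalgebra R A} {u : X → A} (hu : ∀ x, u x ∈ S)
    (p : FreeAlgebra R X) : lift R u p ∈ S := by
  induction p using FreeAlgebra.induction with
  | grade0 c => simp
  | grade1 x => simpa using hu x
  | add x y hx hy => simpa using S.add_mem hx hy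
  | mul x y hx hy => simpa using S.mul_mem hx hy

variable {m n : Type*} [LinearOrder m] [Fintype m] [DecidableEq m]

theorem isUpperTriangular_lift {u : X → Matrix m m R} (hu : ∀ x, (u x).IsUpperTriangular)
    (p : FreeAlgebra R X) : (lift R u p).IsUpperTriangular :=
  lift_mem (S := Matrix.blockTriangularSubalgebra R R id) hu p

theorem lift_submatrix_of_isUpperTriangular [Fintype n] [DecidableEq n]
    {u : X → Matrix m m R} (hu : ∀ x, (u x).IsUpperTriangular) {e : n → m} (he : Injective e)
    (hconv : (Set.range e).OrdConnected) (p : FreeAlgebra R X) :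
    (lift R u p).submatrix e e = lift R (fun x => (u x).submatrix e e) p := by
  induction p using FreeAlgebra.induction with
  | grade0 c => simp [Matrix.algebraMap_eq_diagonal, Matrix.submatrix_diagonal _ _ he]
  | grade1 x => simp
  | add x y hx hy =>
    rw [map_add, map_add, ← hx, ← hy]
    rfl
  | mul x y hx hy =>
    rw [map_mul, map_mul, ← hx, ← hy]
    exact (isUpperTriangular_lift hu x).submatrix_mul (isUpperTriangular_lift hu y) he hconv

end FreeAlgebra

namespace Fin

variable {r n : ℕ}

def windowOrderEmb (a : ℕ) (h : a + r ≤ n) : Fin r ↪o Fin n :=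
  (natAddOrderEmb a).trans (castLEOrderEmb h)

@[simp]
theorem coe_windowOrderEmb (a : ℕ) (h : a + r ≤ n) (s : Fin r) :
    (windowOrderEmb a h s : ℕ) = a + s :=
  rfl

theorem ordConnected_range_windowOrderEmb (a : ℕ) (h : a + r ≤ n) :
    (Set.range (windowOrderEmb a h)).OrdConnected := by
  refine ⟨?_⟩
  rintro _ ⟨s, rfl⟩ _ ⟨t, rfl⟩ k ⟨hsk, hkt⟩
  have hsk' : a + s ≤ k := hsk
  have hkt' : (k : ℕ) ≤ a + t := hkt
  exact ⟨⟨k - a, by omega⟩, Fin.ext (by simp; omega)⟩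

end Fin

theorem Matrix.IsUpperTriangular.apply_eq_zero_of_submatrix_windowOrderEmb
    {R : Type*} [Zero R] {n r : ℕ} {M : Matrix (Fin n) (Fin n) R} (hM : M.IsUpperTriangular)
    (hrn : r ≤ n)
    (hwin : ∀ a (h : a + r ≤ n),
      M.submatrix (Fin.windowOrderEmb a h) (Fin.windowOrderEmb a h) = 0)
    {i j : Fin n} (hij : (j : ℕ) < i + r) : M i j = 0 := by
  rcases lt_or_ge j i with hji | hle
  · exact hM hji
  have hle : (i : ℕ) ≤ j := hle
  -- the window of length `r` starting at `min i (n - r)` contains both `i` and `j`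
  set a := min (i : ℕ) (n - r)
  have ha : a + r ≤ n := by omega
  have hi : Fin.windowOrderEmb a ha ⟨i - a, by omega⟩ = i := Fin.ext (by simp; omega)
  have hj : Fin.windowOrderEmb a ha ⟨j - a, by omega⟩ = j := Fin.ext (by simp; omega)
  simpa [hi, hj] using congrFun (congrFun (hwin a ha) ⟨i - a, by omega⟩) ⟨j - a, by omega⟩

theorem stmt_7_general {K : Type*} [Field K] (m n r : ℕ)
    (p : FreeAlgebra K (Fin m))
    (hord : HasOrder p r) (hr2 : r + 1 < n) :
    ∀ u : Fin m → Matrix (Fin n) (Fin n) K, (∀ i, UT (u i)) →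
      ∀ i j : Fin n, (j : ℕ) < (i : ℕ) + r → (FreeAlgebra.lift K u p) i j = 0 := by
  intro u hu i j hij
  have hU : ∀ k, (u k).IsUpperTriangular := fun k _ _ h => hu k _ _ h
  refine (FreeAlgebra.isUpperTriangular_lift hU p).apply_eq_zero_of_submatrix_windowOrderEmb
    (by omega) (fun a ha => ?_) hij
  rw [FreeAlgebra.lift_submatrix_of_isUpperTriangular hU (Fin.windowOrderEmb a ha).injective
    (Fin.ordConnected_range_windowOrderEmb a ha)]
  exact hord.1 _ fun k _ _ hst => hU k ((Fin.windowOrderEmb a ha).strictMono hst)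

theorem stmt_7 {K : Type*} [Field K] (m n r : ℕ) (hm : 1 ≤ m) (hn : 2 ≤ n)
    (p : FreeAlgebra K (Fin m)) (hp : ZeroConst p)
    (hord : HasOrder p r) (hr1 : 1 < r) (hr2 : r + 1 < n) :
    ∀ u : Fin m → Matrix (Fin n) (Fin n) K, (∀ i, UT (u i)) →
      ∀ i j : Fin n, (j : ℕ) < (i : ℕ) + r → (FreeAlgebra.lift K u p) i j = 0 :=
  stmt_7_general m n r p hord hr2
end

section
/- Let K be an infinite field, n ≥ 5 and 1 < r < n − 2 integers. Then for p(x,y) = [x,y]^r, the image p(T_n(K)) is strictly contained in T_n(K)^{(r−1)}; in particular, the matrix e_{1,r+1} + e_{3,r+3} belongs to T_n(K)^{(r−1)} but not to p(T_n(K)). -/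
/-!
Write `C = [A, B]`. Since `A` and `B` are upper triangular, `C` is strictly upper triangular, so
`(C ^ r) i (i + r)` is the product of the `r` consecutive superdiagonal entries
`C m (m + 1)`, `i ≤ m < i + r`. For `r ≥ 2` the windows starting at `0` and at `2` cover the one
starting at `1`, so `C ^ r` cannot be `1` at `(0, r)` and `(2, r + 2)` but `0` at `(1, r + 1)`.
-/

open Finset

theorem prod_Ico_ne_zero_of_neighbours {M₀ : Type*} [CommMonoidWithZero M₀] [NoZeroDivisors M₀]
    [Nontrivial M₀] (d : ℕ → M₀) {i r : ℕ} (hr : 2 ≤ r)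
    (h₀ : ∏ m ∈ Ico i (i + r), d m ≠ 0) (h₂ : ∏ m ∈ Ico (i + 2) (i + 2 + r), d m ≠ 0) :
    ∏ m ∈ Ico (i + 1) (i + 1 + r), d m ≠ 0 := by
  rw [prod_ne_zero_iff] at h₀ h₂ ⊢
  intro m hm
  rw [mem_Ico] at hm
  by_cases hmr : m < i + r
  · exact h₀ m (mem_Ico.2 ⟨by omega, hmr⟩)
  · exact h₂ m (mem_Ico.2 ⟨by omega, by omega⟩)

namespace Matrix

variable {R : Type*} {n : ℕ}

def superdiag [Zero R] (C : Matrix (Fin n) (Fin n) R) (m : ℕ) : R :=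
  if h : m + 1 < n then C ⟨m, by omega⟩ ⟨m + 1, h⟩ else 0

theorem pow_apply_eq_zero_of_lt_add [Semiring R] {C : Matrix (Fin n) (Fin n) R}
    (hC : ∀ i j : Fin n, (j : ℕ) ≤ i → C i j = 0) (r : ℕ) {i j : Fin n}
    (hij : (j : ℕ) < i + r) : (C ^ r) i j = 0 := by
  induction r generalizing j with
  | zero => exact one_apply_ne (Fin.ne_of_val_ne (by omega))
  | succ r ih =>
    rw [pow_succ, mul_apply]
    refine sum_eq_zero fun k _ => ?_
    by_cases hk : (k : ℕ) < i + r
    · rw [ih hk, zero_mul]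
    · rw [hC k j (by omega), mul_zero]

theorem pow_apply_eq_prod_superdiag [CommSemiring R] {C : Matrix (Fin n) (Fin n) R}
    (hC : ∀ i j : Fin n, (j : ℕ) ≤ i → C i j = 0) (r : ℕ) {i j : Fin n}
    (hij : (j : ℕ) = i + r) : (C ^ r) i j = ∏ m ∈ Ico (i : ℕ) (i + r), C.superdiag m := by
  induction r generalizing j with
  | zero =>
    obtain rfl : i = j := Fin.ext (by omega)
    simp
  | succ r ih =>
    let k : Fin n := ⟨i + r, by omega⟩
    rw [pow_succ, mul_apply, sum_eq_single k, ih rfl, ← add_assoc,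
      prod_Ico_succ_top (Nat.le_add_right _ _)]
    · congr
      simp only [superdiag, dif_pos (show (i : ℕ) + r + 1 < n by omega)]
      congr
      exact Fin.ext hij
    · intro l _ hl
      by_cases hlt : (l : ℕ) < i + r
      · rw [pow_apply_eq_zero_of_lt_add hC r hlt, zero_mul]
      · rw [hC l j (by simp only [k, ne_eq, Fin.ext_iff] at hl; omega), mul_zero]
    · simp

end Matrix

theorem UT.commutator_apply_eq_zero {K : Type*} [Field K] {n : ℕ}
    {A B : Matrix (Fin n) (Fin n) K} (hA : UT A) (hB : UT B) {i j : Fin n}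
    (hij : (j : ℕ) ≤ i) : (A * B - B * A) i j = 0 := by
  rw [Matrix.sub_apply, Matrix.mul_apply, Matrix.mul_apply, sub_eq_zero]
  refine sum_congr rfl fun k _ => ?_
  by_cases hki : (k : ℕ) < i
  · rw [hA i k hki, hB i k hki, zero_mul, zero_mul]
  by_cases hjk : (j : ℕ) < k
  · rw [hA k j hjk, hB k j hjk, mul_zero, mul_zero]
  obtain rfl : i = k := Fin.ext (by omega)
  obtain rfl : j = i := Fin.ext (by omega)
  exact mul_comm _ _

theorem stmt_13 {K : Type*} [Field K] (n r : ℕ)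
    (hr1 : 1 < r) (hr2 : r < n - 2) :
    (∀ i j : Fin n, (j : ℕ) < (i : ℕ) + r →
      (Matrix.single (⟨0, by omega⟩ : Fin n) (⟨r, by omega⟩ : Fin n) (1 : K) +
        Matrix.single (⟨2, by omega⟩ : Fin n) (⟨r + 2, by omega⟩ : Fin n) (1 : K))
        i j = 0) ∧
    ∀ A B : Matrix (Fin n) (Fin n) K, UT A → UT B →
      (A * B - B * A) ^ r ≠
        Matrix.single (⟨0, by omega⟩ : Fin n) (⟨r, by omega⟩ : Fin n) (1 : K) +
          Matrix.single (⟨2, by omega⟩ : Fin n) (⟨r + 2, by omega⟩ : Fin n) (1 : K) := by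
  refine ⟨fun i j hij => ?_, fun A B hA hB h => ?_⟩
  · simp only [Matrix.add_apply, Matrix.single_apply, Fin.ext_iff]
    rw [if_neg (by omega), if_neg (by omega), add_zero]
  have hC : ∀ i j : Fin n, (j : ℕ) ≤ i → (A * B - B * A) i j = 0 :=
    fun _ _ => hA.commutator_apply_eq_zero hB
  set d := (A * B - B * A).superdiag
  have window (i : ℕ) (hi : i + r < n) :
      ∏ m ∈ Ico i (i + r), d m = ((A * B - B * A) ^ r) ⟨i, by omega⟩ ⟨i + r, hi⟩ :=
    (Matrix.pow_apply_eq_prod_superdiag hC r (i := ⟨i, by omega⟩) rfl).symm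
  have h₀ : ∏ m ∈ Ico 0 r, d m = 1 := by simpa [h, Matrix.single_apply] using window 0 (by omega)
  have h₁ : ∏ m ∈ Ico 1 (1 + r), d m = 0 := by
    simpa [h, Matrix.single_apply] using window 1 (by omega)
  have h₂ : ∏ m ∈ Ico 2 (2 + r), d m = 1 := by
    simpa [h, Matrix.single_apply, Fin.ext_iff, add_comm] using window 2 (by omega)
  exact prod_Ico_ne_zero_of_neighbours d (i := 0) hr1 (by rw [zero_add, h₀]; exact one_ne_zero)
    (h₂ ▸ one_ne_zero) h₁
end

section
/- Let K be an infinite field and f(x,y) = xy − yx. For every n ≥ 2, the image f(T_n(K)) equals the set of all strictly upper triangular n × n matrices: every strictly upper triangular matrix over K is a commutator [A,B] of two upper triangular matrices. -/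
namespace Matrix

variable {m R : Type*} [Fintype m]

lemma IsUpperTriangular.mul_apply_self [LinearOrder m] [NonUnitalNonAssocSemiring R]
    {A B : Matrix m m R} (hA : A.IsUpperTriangular) (hB : B.IsUpperTriangular) (i : m) :
    (A * B) i i = A i i * B i i := by
  rw [mul_apply]
  refine Finset.sum_eq_single i (fun k _ hki => ?_) (by simp)
  rcases hki.lt_or_gt with hki | hik
  · rw [hA hki, zero_mul]
  · rw [hB hik, mul_zero]

lemma IsUpperTriangular.commutator_apply_of_le [LinearOrder m] [CommRing R]
    {A B : Matrix m m R} (hA : A.IsUpperTriangular) (hB : B.IsUpperTriangular) {i j : m}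
    (hji : j ≤ i) : (A * B - B * A) i j = 0 := by
  rcases hji.lt_or_eq with hji | rfl
  · exact ((hA.mul hB).sub (hB.mul hA)) hji
  · rw [sub_apply, hA.mul_apply_self hB, hB.mul_apply_self hA, mul_comm, sub_self]

/-- The `(i, j)` entry of `diagonal d * X - X * diagonal d` is `(d i - d j) * X i j`. -/
lemma diagonal_mul_sub_mul_diagonal_div_sub [DecidableEq m] {K : Type*} [Field K] {d : m → K}
    (hd : Function.Injective d) {C : Matrix m m K} (hC : ∀ i, C i i = 0) :
    diagonal d * of (fun i j => C i j / (d i - d j)) -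
      of (fun i j => C i j / (d i - d j)) * diagonal d = C := by
  ext i j
  rw [sub_apply, diagonal_mul, mul_diagonal, of_apply]
  rcases eq_or_ne i j with rfl | hij
  · simp [hC i]
  · have : d i - d j ≠ 0 := sub_ne_zero.mpr (hd.ne hij)
    field_simp

end Matrix

open Matrix in
theorem stmt_15_general {K : Type*} [Field K] [Infinite K] (n : ℕ) :
    ∀ C : Matrix (Fin n) (Fin n) K,
      (∀ i j : Fin n, (j : ℕ) ≤ (i : ℕ) → C i j = 0) ↔
      ∃ A B : Matrix (Fin n) (Fin n) K, UT A ∧ UT B ∧ A * B - B * A = C := by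
  intro C
  constructor
  · intro hC
    let d : Fin n ↪ K := Fin.valEmbedding.trans (Infinite.natEmbedding K)
    refine ⟨diagonal d, of fun i j => C i j / (d i - d j), blockTriangular_diagonal _,
      fun i j hji => ?_, diagonal_mul_sub_mul_diagonal_div_sub d.injective fun i => hC i i le_rfl⟩
    rw [of_apply, hC i j hji.le, zero_div]
  · rintro ⟨A, B, hA, hB, rfl⟩ i j hji
    exact IsUpperTriangular.commutator_apply_of_le hA hB hji

theorem stmt_15 {K : Type*} [Field K] [Infinite K] (n : ℕ) (hn : 2 ≤ n) :
    ∀ C : Matrix (Fin n) (Fin n) K,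
      (∀ i j : Fin n, (j : ℕ) ≤ (i : ℕ) → C i j = 0) ↔
      ∃ A B : Matrix (Fin n) (Fin n) K, UT A ∧ UT B ∧ A * B - B * A = C :=
  stmt_15_general n
end
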